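/- arXiv:2010.07346 — 3 statements merged into one kernel-verified Lean document; each statement's English description precedes it below -/
import Mathlib

section
/- Let p ≥ 1 be an integer, ε > 0, and define Φ(Λ) = ∑_{j=1}^d (1 + (ε/p)Λ_j)^p. For any Λ ∈ ℝ^d_{≥0} and any v ∈ ℝ^d_{≥0} with ‖v‖_p ≤ O, where O ≥ 0, one has Φ(Λ + v) ≤ Φ(Λ) · exp(ε·O / d^{1/p}). -/
open Finset Real

/-- The ℓ_p norm of a vector in ℝ^d, for a natural exponent p. -/
noncomputable def lpNorm (d p : ℕ) (x : Fin d → ℝ) : ℝ :=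
  (∑ j, |x j| ^ p) ^ ((1 : ℝ) / p)

/-- For Φ(Λ) = ∑_j (1 + (ε/p)Λ_j)^p, Λ ∈ ℝ^d_{≥0} and v ∈ ℝ^d_{≥0} with
‖v‖_p ≤ O, one has Φ(Λ + v) ≤ Φ(Λ)·exp(ε·O/d^{1/p}). -/
theorem phi_exponential_growth
    (d p : ℕ) (hd : 1 ≤ d) (hp : 1 ≤ p) (ε : ℝ) (hε : 0 < ε)
    (Λ v : Fin d → ℝ) (hΛ : ∀ j, 0 ≤ Λ j) (hv : ∀ j, 0 ≤ v j)
    (O : ℝ) (hO : 0 ≤ O) (hvO : lpNorm d p v ≤ O) :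
    ∑ j, (1 + (ε / p) * (Λ j + v j)) ^ p
      ≤ (∑ j, (1 + (ε / p) * Λ j) ^ p) *
        Real.exp (ε * O / (d : ℝ) ^ ((1 : ℝ) / p)) := by
  have hp0 : (0 : ℝ) < p := by exact_mod_cast hp
  set q : ℝ := (p : ℝ) with hqdef
  have hq1 : (1 : ℝ) ≤ q := by rw [hqdef]; exact_mod_cast hp
  have hq0 : q ≠ 0 := by positivity
  have hεp : 0 ≤ ε / p := by positivity
  have ha : ∀ j, (0:ℝ) ≤ 1 + (ε / p) * Λ j := fun j => by
    have := hΛ j; positivity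
  have hb : ∀ j, (0:ℝ) ≤ (ε / p) * v j := fun j => mul_nonneg hεp (hv j)
  have hab : ∀ j, (0:ℝ) ≤ 1 + (ε / p) * (Λ j + v j) := fun j => by
    have := hΛ j; have := hv j; positivity
  -- switch to rpow
  have npow_eq : ∀ x : ℝ, x ^ p = x ^ q := fun x => (Real.rpow_natCast x p).symm
  set Φ : ℝ := ∑ j, (1 + (ε / p) * Λ j) ^ q with hΦdef
  set S : ℝ := ∑ j, (1 + (ε / p) * (Λ j + v j)) ^ q with hSdef
  set B : ℝ := ∑ j, ((ε / p) * v j) ^ q with hBdef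
  have hΦ0 : 0 ≤ Φ := Finset.sum_nonneg fun j _ => Real.rpow_nonneg (ha j) q
  have hS0 : 0 ≤ S := Finset.sum_nonneg fun j _ => Real.rpow_nonneg (hab j) q
  have hB0 : 0 ≤ B := Finset.sum_nonneg fun j _ => Real.rpow_nonneg (hb j) q
  -- Minkowski
  have mink : S ^ (1/q) ≤ Φ ^ (1/q) + B ^ (1/q) := by
    have h := Real.Lp_add_le_of_nonneg (s := Finset.univ)
      (f := fun j => 1 + (ε / p) * Λ j) (g := fun j => (ε / p) * v j) (p := q) hq1
      (fun j _ => ha j) (fun j _ => hb j)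
    have hrw : S = ∑ j, ((1 + (ε / p) * Λ j) + (ε / p) * v j) ^ q := by
      apply Finset.sum_congr rfl; intro j _; ring_nf
    rw [hrw]; exact h
  -- B ^ (1/q) = (ε/p) * lpNorm d p v
  have hBnorm : B ^ (1/q) = (ε / p) * lpNorm d p v := by
    have : B = (ε / p) ^ q * ∑ j, (v j) ^ q := by
      rw [Finset.mul_sum]
      apply Finset.sum_congr rfl; intro j _
      exact Real.mul_rpow hεp (hv j)
    rw [this, Real.mul_rpow (Real.rpow_nonneg hεp q)
        (Finset.sum_nonneg fun j _ => Real.rpow_nonneg (hv j) q),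
      ← Real.rpow_mul hεp, mul_one_div,
      div_self hq0, Real.rpow_one]
    congr 1
    unfold lpNorm
    congr 1
    apply Finset.sum_congr rfl; intro j _
    rw [abs_of_nonneg (hv j), npow_eq]
  have hBle : B ^ (1/q) ≤ (ε / p) * O := by
    rw [hBnorm]; exact mul_le_mul_of_nonneg_left hvO hεp
  -- Φ ≥ d
  have hΦd : (d : ℝ) ≤ Φ := by
    calc (d : ℝ) = ∑ _j : Fin d, (1:ℝ) := by simp
    _ ≤ Φ := by
      apply Finset.sum_le_sum; intro j _
      calc (1:ℝ) = 1 ^ q := (Real.one_rpow q).symm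
      _ ≤ (1 + (ε / p) * Λ j) ^ q := by
        apply Real.rpow_le_rpow zero_le_one _ (le_trans zero_le_one hq1)
        have := mul_nonneg hεp (hΛ j); linarith
  have hd0 : (0:ℝ) < (d:ℝ) := by exact_mod_cast hd
  have hΦdq : (d : ℝ) ^ (1/q) ≤ Φ ^ (1/q) :=
    Real.rpow_le_rpow (le_of_lt hd0) hΦd (by positivity)
  have hdq0 : (0:ℝ) < (d : ℝ) ^ (1/q) := Real.rpow_pos_of_pos hd0 _
  set x : ℝ := ε * O / (d : ℝ) ^ (1/q) with hxdef
  have hx0 : 0 ≤ x := by positivity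
  -- key bound on S^(1/q)
  have key : S ^ (1/q) ≤ Φ ^ (1/q) * (1 + x / p) := by
    have h1 : (ε / p) * O ≤ Φ ^ (1/q) * (x / p) := by
      have hr : (1:ℝ) ≤ Φ ^ (1/q) / (d:ℝ) ^ (1/q) := (one_le_div hdq0).mpr hΦdq
      have heq : Φ ^ (1/q) * (x / p) = (ε / p * O) * (Φ ^ (1/q) / (d:ℝ) ^ (1/q)) := by
        rw [hxdef]; field_simp
      calc ε / p * O = (ε / p * O) * 1 := by ring
      _ ≤ (ε / p * O) * (Φ ^ (1/q) / (d:ℝ) ^ (1/q)) :=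
        mul_le_mul_of_nonneg_left hr (by positivity)
      _ = Φ ^ (1/q) * (x / p) := heq.symm
    calc S ^ (1/q) ≤ Φ ^ (1/q) + B ^ (1/q) := mink
    _ ≤ Φ ^ (1/q) + (ε / p) * O := by linarith
    _ ≤ Φ ^ (1/q) + Φ ^ (1/q) * (x / p) := by linarith
    _ = Φ ^ (1/q) * (1 + x / p) := by ring
  -- raise to power q (nat power p)
  have hone : (0:ℝ) ≤ 1 + x / p := by positivity
  have hSpow : S ≤ Φ * (1 + x / p) ^ p := by
    have hq' : (0:ℝ) ≤ Φ ^ (1/q) * (1 + x / p) := by positivity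
    have h := pow_le_pow_left₀ (Real.rpow_nonneg hS0 _) key p
    rw [mul_pow] at h
    have hS' : (S ^ (1/q)) ^ p = S := by
      rw [← Real.rpow_natCast (S ^ (1/q)) p, ← Real.rpow_mul hS0,
        one_div_mul_cancel hq0, Real.rpow_one]
    have hΦ' : (Φ ^ (1/q)) ^ p = Φ := by
      rw [← Real.rpow_natCast (Φ ^ (1/q)) p, ← Real.rpow_mul hΦ0,
        one_div_mul_cancel hq0, Real.rpow_one]
    rwa [hS', hΦ'] at h
  -- (1 + x/p)^p ≤ exp x
  have hexp : (1 + x / p) ^ p ≤ Real.exp x := by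
    have h1 : 1 + x / p ≤ Real.exp (x / p) := by
      have := Real.add_one_le_exp (x / p); linarith
    calc (1 + x / p) ^ p ≤ (Real.exp (x / p)) ^ p := pow_le_pow_left₀ hone h1 p
    _ = Real.exp x := by
      rw [← Real.exp_nat_mul]
      congr 1
      field_simp
  calc ∑ j, (1 + (ε / p) * (Λ j + v j)) ^ p = S := by
        apply Finset.sum_congr rfl; intro j _; exact npow_eq _
  _ ≤ Φ * (1 + x / p) ^ p := hSpow
  _ ≤ Φ * Real.exp x := mul_le_mul_of_nonneg_left hexp hΦ0
  _ = (∑ j, (1 + (ε / p) * Λ j) ^ p) * Real.exp (ε * O / (d : ℝ) ^ ((1:ℝ)/p)) := by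
      congr 1
      apply Finset.sum_congr rfl; intro j _; exact (npow_eq _).symm
end

section
/- Lower bound construction value for the adversarial load balancing lower bound: for d a power of 2, k = min{p, log₂ d} phases of length L, an algorithm that in phase i distributes load so that d/2^i dimensions receive (iL)/2 load each (for i = 1,…,k) has ℓ_p norm at least (d/2^k)^{1/p} · (Lk)/2, which is at least (1/4)·d^{1/p}·L·k whenever k ≤ p. -/
open Finset Real

/-- Lower bound value in the adversarial load balancing lower bound: if d is a
power of 2, k ≤ p, and Λ ∈ ℝ^d_{≥0} has (at least) d/2^k coordinates each equal
to Lk/2, then ‖Λ‖_p ≥ (d/2^k)^{1/p}·(Lk/2) ≥ (1/4)·d^{1/p}·L·k. -/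
theorem load_balancing_lower_bound_value
    (d p k e : ℕ) (hd : d = 2 ^ e) (hke : k ≤ e) (hk : 1 ≤ k) (hkp : k ≤ p)
    (L : ℝ) (hL : 0 < L)
    (Λ : Fin d → ℝ) (hΛ : ∀ j, 0 ≤ Λ j)
    (S : Finset (Fin d)) (hScard : S.card = d / 2 ^ k)
    (hSval : ∀ j ∈ S, Λ j = L * k / 2) :
    ((d : ℝ) / 2 ^ k) ^ ((1 : ℝ) / p) * (L * k / 2) ≤ lpNorm d p Λ ∧
      (1 / 4 : ℝ) * (d : ℝ) ^ ((1 : ℝ) / p) * L * k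
        ≤ ((d : ℝ) / 2 ^ k) ^ ((1 : ℝ) / p) * (L * k / 2) := by
  have hp : 1 ≤ p := hk.trans hkp
  have hp0 : (0:ℝ) < p := by exact_mod_cast Nat.lt_of_lt_of_le Nat.zero_lt_one hp
  have hv : (0:ℝ) ≤ L * k / 2 := by positivity
  -- d / 2^k as reals equals the natural division
  have hdk : ((d / 2 ^ k : ℕ) : ℝ) = (d : ℝ) / 2 ^ k := by
    subst hd
    rw [Nat.pow_div hke (by norm_num)]
    push_cast
    rw [eq_div_iff (by positivity), ← pow_add, Nat.sub_add_cancel hke]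
  have hdk0 : (0:ℝ) ≤ (d : ℝ) / 2 ^ k := by positivity
  constructor
  · -- first inequality
    have hsum : ((d : ℝ) / 2 ^ k) * (L * k / 2) ^ p ≤ ∑ j, |Λ j| ^ p := by
      calc ((d : ℝ) / 2 ^ k) * (L * k / 2) ^ p
          = ∑ j ∈ S, (L * k / 2) ^ p := by
            rw [Finset.sum_const, nsmul_eq_mul, hScard, hdk]
        _ = ∑ j ∈ S, |Λ j| ^ p := by
            refine Finset.sum_congr rfl fun j hj => ?_
            rw [hSval j hj, abs_of_nonneg hv]
        _ ≤ ∑ j, |Λ j| ^ p := by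
            refine Finset.sum_le_sum_of_subset_of_nonneg (Finset.subset_univ S)
              fun j _ _ => by positivity
    have := Real.rpow_le_rpow (by positivity) hsum (by positivity : (0:ℝ) ≤ 1/p)
    refine le_trans (le_of_eq ?_) this
    rw [Real.mul_rpow hdk0 (by positivity), ← Real.rpow_natCast (L * k / 2) p,
      ← Real.rpow_mul hv]
    rw [mul_one_div, div_self (ne_of_gt hp0), Real.rpow_one]
  · -- second inequality
    have h2 : ((d : ℝ) / 2 ^ k) ^ ((1 : ℝ) / p)
        = (d : ℝ) ^ ((1 : ℝ) / p) / ((2:ℝ) ^ k) ^ ((1 : ℝ) / p) := by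
      rw [Real.div_rpow (by positivity) (by positivity)]
    have h3 : ((2:ℝ) ^ k) ^ ((1 : ℝ) / p) ≤ 2 := by
      rw [← Real.rpow_natCast (2:ℝ) k, ← Real.rpow_mul (by norm_num)]
      calc ((2:ℝ)) ^ ((k : ℝ) * (1 / p)) ≤ (2:ℝ) ^ (1:ℝ) := by
            apply Real.rpow_le_rpow_of_exponent_le (by norm_num)
            rw [mul_one_div, div_le_one hp0]
            exact_mod_cast hkp
        _ = 2 := Real.rpow_one 2
    have h4 : (d : ℝ) ^ ((1 : ℝ) / p) / 2 ≤ (d : ℝ) ^ ((1 : ℝ) / p) / ((2:ℝ) ^ k) ^ ((1 : ℝ) / p) := by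
      apply div_le_div_of_nonneg_left (by positivity) (by positivity) h3
    calc (1 / 4 : ℝ) * (d : ℝ) ^ ((1 : ℝ) / p) * L * k
        = ((d : ℝ) ^ ((1 : ℝ) / p) / 2) * (L * k / 2) := by ring
      _ ≤ ((d : ℝ) ^ ((1 : ℝ) / p) / ((2:ℝ) ^ k) ^ ((1 : ℝ) / p)) * (L * k / 2) := by
          apply mul_le_mul_of_nonneg_right h4 hv
      _ = ((d : ℝ) / 2 ^ k) ^ ((1 : ℝ) / p) * (L * k / 2) := by rw [h2]
end

section
/- Mixed-norm additive approximation: for integers p, r ≥ 1, ε > 0, δ = ε/(p+r), and (x₀, y) ∈ ℝ_{≥0} × ℝ^d_{≥0}, define Ψ_{p,r}(x₀,y) = (1/δ)·(((1+δx₀)^r + ‖1_d + δy‖_p^r)^{1/r} − 1). Then ‖(x₀,y)‖_{p,r} ≤ Ψ_{p,r}(x₀,y) ≤ ‖(x₀,y)‖_{p,r} + ((p+r)/ε)·‖1_d‖_p, where ‖(x₀,y)‖_{p,r} := ‖(x₀, ‖y‖_p)‖_r = (x₀^r + ‖y‖_p^r)^{1/r}. -/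
open Finset Real

/-- The mixed (p,r) norm of (x₀, y) ∈ ℝ × ℝ^d: ‖(x₀, ‖y‖_p)‖_r. -/
noncomputable def mixedNorm (d p r : ℕ) (x0 : ℝ) (y : Fin d → ℝ) : ℝ :=
  (|x0| ^ r + (lpNorm d p y) ^ r) ^ ((1 : ℝ) / r)

/-- Mixed-norm smooth approximation. -/
noncomputable def PsiMixed (d p r : ℕ) (δ : ℝ) (x0 : ℝ) (y : Fin d → ℝ) : ℝ :=
  (1 / δ) * (((1 + δ * x0) ^ r
      + (lpNorm d p (fun j => 1 + δ * y j)) ^ r) ^ ((1 : ℝ) / r) - 1)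

/-!
Both levels of the mixed norm are handled by the same two facts about an ℓ_p norm of a
nonnegative vector u with at least one coordinate: Minkowski, ‖1 + u‖ ≤ ‖1‖ + ‖u‖, and the
reverse bound 1 + ‖u‖ ≤ ‖1 + u‖. Applied with u = δy and then with u = δ(x₀, ‖y‖_p), they
squeeze ((1 + δx₀)^r + ‖1 + δy‖_p^r)^{1/r} between 1 + δ‖(x₀,y)‖_{p,r} and
1 + ‖1_d‖_p + δ‖(x₀,y)‖_{p,r}; dividing by δ gives the claim.
-/

section LpNorm

variable {d p : ℕ}

lemma lpNorm_nonneg (x : Fin d → ℝ) : 0 ≤ lpNorm d p x :=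
  rpow_nonneg (sum_nonneg fun j _ => pow_nonneg (abs_nonneg (x j)) p) _

lemma lpNorm_mono {x y : Fin d → ℝ} (h : ∀ j, |x j| ≤ |y j|) :
    lpNorm d p x ≤ lpNorm d p y :=
  rpow_le_rpow (sum_nonneg fun j _ => pow_nonneg (abs_nonneg (x j)) p)
    (sum_le_sum fun j _ => pow_le_pow_left₀ (abs_nonneg _) (h j) p) (by positivity)

lemma abs_le_lpNorm (hp : p ≠ 0) (x : Fin d → ℝ) (j : Fin d) : |x j| ≤ lpNorm d p x :=
  calc |x j| = (|x j| ^ p) ^ ((1 : ℝ) / p) := by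
        rw [one_div, pow_rpow_inv_natCast (abs_nonneg _) hp]
    _ ≤ lpNorm d p x :=
        rpow_le_rpow (pow_nonneg (abs_nonneg _) p)
          (single_le_sum (fun i _ => pow_nonneg (abs_nonneg (x i)) p) (mem_univ j))
          (by positivity)

lemma lpNorm_const_mul (hp : p ≠ 0) (c : ℝ) (x : Fin d → ℝ) :
    lpNorm d p (fun j => c * x j) = |c| * lpNorm d p x := by
  simp only [lpNorm, abs_mul, mul_pow, ← mul_sum]
  rw [mul_rpow (pow_nonneg (abs_nonneg c) p)
      (sum_nonneg fun j _ => pow_nonneg (abs_nonneg (x j)) p),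
    one_div, pow_rpow_inv_natCast (abs_nonneg c) hp]

lemma lpNorm_add_le (hp : 1 ≤ p) (x y : Fin d → ℝ) :
    lpNorm d p (fun j => x j + y j) ≤ lpNorm d p x + lpNorm d p y := by
  have h := Real.Lp_add_le univ x y (p := p) (by exact_mod_cast hp)
  simp only [rpow_natCast] at h
  exact h

/-- Since every `u j` is at most `‖u‖`, the vector `a + u` dominates `(1 + a / ‖u‖) • u`. -/
lemma add_lpNorm_le_lpNorm_const_add (hd : 0 < d) (hp : p ≠ 0) {a : ℝ} (ha : 0 ≤ a)
    {u : Fin d → ℝ} (hu : ∀ j, 0 ≤ u j) :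
    a + lpNorm d p u ≤ lpNorm d p (fun j => a + u j) := by
  set S := lpNorm d p u
  have hS0 : 0 ≤ S := lpNorm_nonneg u
  rcases hS0.eq_or_lt with hS | hS
  · rw [← hS, add_zero]
    calc a ≤ |a + u ⟨0, hd⟩| := (le_add_of_nonneg_right (hu _)).trans (le_abs_self _)
      _ ≤ _ := abs_le_lpNorm hp (fun j => a + u j) _
  · have hc : 0 ≤ 1 + a / S := by positivity
    calc a + S = |1 + a / S| * S := by rw [abs_of_nonneg hc]; field_simp; ring
      _ = lpNorm d p (fun j => (1 + a / S) * u j) := (lpNorm_const_mul hp _ _).symm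
      _ ≤ lpNorm d p (fun j => a + u j) := lpNorm_mono fun j => by
          have huS : u j / S ≤ 1 :=
            (div_le_one hS).2 ((le_abs_self _).trans (abs_le_lpNorm hp u j))
          rw [abs_of_nonneg (mul_nonneg hc (hu j)), abs_of_nonneg (add_nonneg ha (hu j))]
          calc (1 + a / S) * u j = u j + a * (u j / S) := by ring
            _ ≤ u j + a * 1 := by gcongr
            _ = a + u j := by ring

lemma lpNorm_fin_two (x : Fin 2 → ℝ) :
    lpNorm 2 p x = (|x 0| ^ p + |x 1| ^ p) ^ ((1 : ℝ) / p) := by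
  rw [lpNorm, Fin.sum_univ_two]

lemma lpNorm_fin_two_le (hp : p ≠ 0) (x : Fin 2 → ℝ) : lpNorm 2 p x ≤ |x 0| + |x 1| := by
  rw [lpNorm_fin_two]
  calc (|x 0| ^ p + |x 1| ^ p) ^ ((1 : ℝ) / p) ≤ ((|x 0| + |x 1|) ^ p) ^ ((1 : ℝ) / p) :=
        rpow_le_rpow (by positivity) (pow_add_pow_le (abs_nonneg _) (abs_nonneg _) hp)
          (by positivity)
    _ = |x 0| + |x 1| := by rw [one_div, pow_rpow_inv_natCast (by positivity) hp]

end LpNorm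

section MixedNorm

variable {d p r : ℕ} {δ x0 : ℝ} {y : Fin d → ℝ}

lemma mixedNorm_eq_lpNorm (x0 : ℝ) (y : Fin d → ℝ) :
    mixedNorm d p r x0 y = lpNorm 2 r ![x0, lpNorm d p y] := by
  simp [mixedNorm, lpNorm_fin_two, abs_of_nonneg (lpNorm_nonneg y)]

lemma PsiMixed_eq_lpNorm (h : 0 ≤ 1 + δ * x0) :
    PsiMixed d p r δ x0 y
      = 1 / δ * (lpNorm 2 r ![1 + δ * x0, lpNorm d p (fun j => 1 + δ * y j)] - 1) := by
  simp [PsiMixed, lpNorm_fin_two, abs_of_nonneg h, abs_of_nonneg (lpNorm_nonneg _)]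

lemma mul_mixedNorm_eq (hr : r ≠ 0) (hδ : 0 ≤ δ) :
    δ * mixedNorm d p r x0 y = lpNorm 2 r (fun j => δ * ![x0, lpNorm d p y] j) := by
  rw [lpNorm_const_mul hr, abs_of_nonneg hδ, mixedNorm_eq_lpNorm]

lemma one_add_mul_mixedNorm_le (hd : 0 < d) (hp : p ≠ 0) (hr : r ≠ 0) (hδ : 0 ≤ δ)
    (hx0 : 0 ≤ x0) (hy : ∀ j, 0 ≤ y j) :
    1 + δ * mixedNorm d p r x0 y
      ≤ lpNorm 2 r ![1 + δ * x0, lpNorm d p (fun j => 1 + δ * y j)] := by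
  have hinner : 1 + δ * lpNorm d p y ≤ lpNorm d p (fun j => 1 + δ * y j) := by
    have h := add_lpNorm_le_lpNorm_const_add hd hp zero_le_one
      (u := fun j => δ * y j) fun j => mul_nonneg hδ (hy j)
    rwa [lpNorm_const_mul hp, abs_of_nonneg hδ] at h
  rw [mul_mixedNorm_eq hr hδ]
  refine (add_lpNorm_le_lpNorm_const_add two_pos hr zero_le_one
    (Fin.forall_fin_two.2 ⟨?_, ?_⟩)).trans (lpNorm_mono (Fin.forall_fin_two.2 ⟨?_, ?_⟩))
  · exact mul_nonneg hδ hx0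
  · exact mul_nonneg hδ (lpNorm_nonneg y)
  · simp
  · have h1 : 0 ≤ 1 + δ * lpNorm d p y := by have := lpNorm_nonneg (p := p) y; positivity
    exact abs_le_abs_of_nonneg (by simpa using h1) (by simpa using hinner)

lemma lpNorm_le_one_add_add_mul_mixedNorm (hp : 1 ≤ p) (hr : 1 ≤ r) (hδ : 0 ≤ δ) :
    lpNorm 2 r ![1 + δ * x0, lpNorm d p (fun j => 1 + δ * y j)]
      ≤ 1 + lpNorm d p (fun _ => 1) + δ * mixedNorm d p r x0 y := by
  set D := lpNorm d p (fun _ => 1)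
  have hD : 0 ≤ D := lpNorm_nonneg _
  have hinner : lpNorm d p (fun j => 1 + δ * y j) ≤ D + δ * lpNorm d p y := by
    simpa [lpNorm_const_mul (p := p) (by omega), abs_of_nonneg hδ] using
      lpNorm_add_le hp (fun _ => 1) (fun j => δ * y j)
  have houter : lpNorm 2 r ![1, D] ≤ 1 + D := by
    simpa [abs_of_nonneg hD] using lpNorm_fin_two_le (p := r) (by omega) ![1, D]
  calc lpNorm 2 r ![1 + δ * x0, lpNorm d p (fun j => 1 + δ * y j)]
      ≤ lpNorm 2 r (fun j => ![1, D] j + δ * ![x0, lpNorm d p y] j) :=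
        lpNorm_mono (Fin.forall_fin_two.2
          ⟨by simp, abs_le_abs_of_nonneg (lpNorm_nonneg _) (by simpa using hinner)⟩)
    _ ≤ lpNorm 2 r ![1, D] + δ * mixedNorm d p r x0 y := by
        rw [mul_mixedNorm_eq (by omega) hδ]
        exact lpNorm_add_le hr _ _
    _ ≤ 1 + D + δ * mixedNorm d p r x0 y := by linarith

lemma mixedNorm_le_PsiMixed (hd : 0 < d) (hp : p ≠ 0) (hr : r ≠ 0) (hδ : 0 < δ)
    (hx0 : 0 ≤ x0) (hy : ∀ j, 0 ≤ y j) : mixedNorm d p r x0 y ≤ PsiMixed d p r δ x0 y := by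
  rw [PsiMixed_eq_lpNorm (by positivity), one_div, inv_mul_eq_div, le_div_iff₀ hδ]
  linarith [one_add_mul_mixedNorm_le hd hp hr hδ.le hx0 hy]

lemma PsiMixed_le_mixedNorm_add (hp : 1 ≤ p) (hr : 1 ≤ r) (hδ : 0 < δ) (hx0 : 0 ≤ x0) :
    PsiMixed d p r δ x0 y ≤ mixedNorm d p r x0 y + 1 / δ * lpNorm d p (fun _ => 1) := by
  rw [PsiMixed_eq_lpNorm (by positivity)]
  calc 1 / δ * (lpNorm 2 r ![1 + δ * x0, lpNorm d p (fun j => 1 + δ * y j)] - 1)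
      ≤ 1 / δ * (δ * mixedNorm d p r x0 y + lpNorm d p (fun _ => 1)) := by
        gcongr
        linarith [lpNorm_le_one_add_add_mul_mixedNorm (x0 := x0) (y := y) hp hr hδ.le]
    _ = mixedNorm d p r x0 y + 1 / δ * lpNorm d p (fun _ => 1) := by field_simp

end MixedNorm

/-- Mixed-norm additive approximation: for integers p, r ≥ 1, ε > 0 and
δ = ε/(p+r), and (x₀, y) nonnegative,
‖(x₀,y)‖_{p,r} ≤ Ψ_{p,r}(x₀,y) ≤ ‖(x₀,y)‖_{p,r} + ((p+r)/ε)·‖1_d‖_p. -/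
theorem psi_mixed_additive_approximation
    (d p r : ℕ) (hd : 1 ≤ d) (hp : 1 ≤ p) (hr : 1 ≤ r)
    (ε δ : ℝ) (hε : 0 < ε) (hδ : δ = ε / (p + r))
    (x0 : ℝ) (hx0 : 0 ≤ x0) (y : Fin d → ℝ) (hy : ∀ j, 0 ≤ y j) :
    mixedNorm d p r x0 y ≤ PsiMixed d p r δ x0 y ∧
      PsiMixed d p r δ x0 y
        ≤ mixedNorm d p r x0 y + (((p : ℝ) + r) / ε) * lpNorm d p (fun _ => 1) := by
  have hpr : (0 : ℝ) < p + r := by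
    have : (1 : ℝ) ≤ p := by exact_mod_cast hp
    positivity
  have hδ0 : 0 < δ := hδ ▸ div_pos hε hpr
  have hcoef : ((p : ℝ) + r) / ε = 1 / δ := by rw [hδ, one_div_div]
  rw [hcoef]
  exact ⟨mixedNorm_le_PsiMixed hd (by omega) (by omega) hδ0 hx0 hy,
    PsiMixed_le_mixedNorm_add hp hr hδ0 hx0⟩
end
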